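/- Regret decomposition under estimate perturbation: Let Reg_T and Reg_T^{ref} denote the expected cumulative losses of two exponential-weights algorithms facing the same deterministic loss sequence l_{a,t} ∈ [0,1], where the first uses cumulative loss estimates L̂_{t−1} and the second uses L̃_{t−1}, both with the same learning rate η > 0. If max_a |L̂_{a,t−1} − L̃_{a,t−1}| ≤ M_{t−1} for all t, then E[Reg_T] − E[Reg_T^{ref}] ≤ (η|V|/2) ∑_{t=1}^T E[M_{t−1}], where |V| is the number of actions. -/

import Mathlib

/-!
Both expected losses are integrals of `⟨softmax, l⟩`, so it suffices to bound the difference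
pointwise. Since `|e^u - e^v| ≤ (e^u + e^v) / 2 * |u - v|`, perturbing the logits by at most `c`
in sup norm moves each softmax weight by at most `c` times the sum of its old and new values, so
the `ℓ¹` distance moves by at most `2 c`. As `l ∈ [0, 1]` and both weight vectors have mass one,
`⟨p̂ - p, l⟩ ≤ ‖p̂ - p‖₁ / 2 ≤ c`, which is at most `|V| c / 2` unless `|V| ≤ 1`, where `p̂ = p`.
-/

open MeasureTheory Real

/-- `tanh (t / 2) ≤ t / 2`, cleared of denominators. -/
lemma exp_sub_one_le_mul_exp_add_one_div_two {t : ℝ} (ht : 0 ≤ t) :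
    exp t - 1 ≤ t * (exp t + 1) / 2 := by
  let g : ℝ → ℝ := fun s => s * (exp s + 1) / 2 - exp s + 1
  have hg : ∀ s, HasDerivAt g ((1 - exp s * (1 - s)) / 2) s := fun s =>
    ((((hasDerivAt_id' s).mul ((hasDerivAt_exp s).add_const 1)).div_const 2).sub
      (hasDerivAt_exp s)).add_const 1 |>.congr_deriv (by ring)
  have hg' : ∀ s, 0 ≤ (1 - exp s * (1 - s)) / 2 := fun s => by
    have h := mul_le_mul_of_nonneg_left (one_sub_le_exp_neg s) (exp_pos s).le
    rw [← exp_add, add_neg_cancel, exp_zero] at h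
    linarith
  have := monotone_of_hasDerivAt_nonneg hg hg' ht
  simp only [g, exp_zero] at this
  linarith

/-- The logarithmic mean of `e^u` and `e^v` is at most their arithmetic mean. -/
lemma abs_exp_sub_exp_le (u v : ℝ) : |exp u - exp v| ≤ (exp u + exp v) / 2 * |u - v| := by
  wlog h : v ≤ u generalizing u v
  · rw [abs_sub_comm, abs_sub_comm u, add_comm]
    exact this v u (le_of_not_ge h)
  rw [abs_of_nonneg (sub_nonneg.mpr (exp_le_exp.mpr h)), abs_of_nonneg (sub_nonneg.mpr h)]
  have key := mul_le_mul_of_nonneg_right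
    (exp_sub_one_le_mul_exp_add_one_div_two (sub_nonneg.mpr h)) (exp_pos v).le
  have hsplit : exp (u - v) * exp v = exp u := by rw [← exp_add, sub_add_cancel]
  linear_combination key - (1 - (u - v) / 2) * hsplit

lemma sum_sub_mul_le_half_sum_abs {ι : Type*} (s : Finset ι) {P Q l : ι → ℝ}
    (hPQ : ∑ i ∈ s, P i = ∑ i ∈ s, Q i) (hl : ∀ i ∈ s, l i ∈ Set.Icc (0 : ℝ) 1) :
    ∑ i ∈ s, (P i - Q i) * l i ≤ (∑ i ∈ s, |P i - Q i|) / 2 := by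
  -- Centring `l` at `1 / 2` costs nothing, as `P - Q` has total mass zero.
  have hcentre : ∑ i ∈ s, (P i - Q i) * l i = ∑ i ∈ s, (P i - Q i) * (l i - 1 / 2) := by
    simp only [mul_sub, Finset.sum_sub_distrib, ← Finset.sum_mul, hPQ, sub_self, zero_mul,
      sub_zero]
  rw [hcentre, Finset.sum_div]
  refine Finset.sum_le_sum fun i hi => ?_
  have hli : |l i - 1 / 2| ≤ 1 / 2 := by
    rw [abs_le]; constructor <;> linarith [(hl i hi).1, (hl i hi).2]
  calc (P i - Q i) * (l i - 1 / 2) ≤ |P i - Q i| * |l i - 1 / 2| := by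
        rw [← abs_mul]; exact le_abs_self _
    _ ≤ |P i - Q i| / 2 := by nlinarith [abs_nonneg (P i - Q i)]

noncomputable def softmax {V : Type*} [Fintype V] (x : V → ℝ) (a : V) : ℝ :=
  exp (x a) / ∑ b, exp (x b)

namespace softmax

variable {V : Type*} [Fintype V]

lemma sum_eq_one [Nonempty V] (x : V → ℝ) : ∑ a, softmax x a = 1 := by
  unfold softmax
  rw [← Finset.sum_div,
    div_self (Finset.sum_pos (fun b _ => exp_pos (x b)) Finset.univ_nonempty).ne']

lemma eq_one_of_subsingleton [Subsingleton V] (x : V → ℝ) (a : V) : softmax x a = 1 := by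
  have : Unique V := uniqueOfSubsingleton a
  rw [← sum_eq_one x, Fintype.sum_unique, Subsingleton.elim default a]

lemma abs_sub_le [Nonempty V] {x y : V → ℝ} {c : ℝ} (hc : ∀ a, |x a - y a| ≤ c) (a : V) :
    |softmax x a - softmax y a| ≤ c * (softmax x a + softmax y a) := by
  have hX : 0 < ∑ b, exp (x b) := Finset.sum_pos (fun b _ => exp_pos _) Finset.univ_nonempty
  have hY : 0 < ∑ b, exp (y b) := Finset.sum_pos (fun b _ => exp_pos _) Finset.univ_nonempty
  have hsub : softmax x a - softmax y a = (∑ b, (exp (x a + y b) - exp (y a + x b)))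
      / ((∑ b, exp (x b)) * ∑ b, exp (y b)) := by
    rw [softmax, softmax, div_sub_div _ _ hX.ne' hY.ne', Finset.mul_sum, Finset.sum_mul,
      ← Finset.sum_sub_distrib]
    exact congrArg (· / _) (Finset.sum_congr rfl fun b _ => by rw [exp_add, exp_add]; ring)
  have hadd : softmax x a + softmax y a = (∑ b, (exp (x a + y b) + exp (y a + x b)))
      / ((∑ b, exp (x b)) * ∑ b, exp (y b)) := by
    rw [softmax, softmax, div_add_div _ _ hX.ne' hY.ne', Finset.mul_sum, Finset.sum_mul,
      ← Finset.sum_add_distrib]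
    exact congrArg (· / _) (Finset.sum_congr rfl fun b _ => by rw [exp_add, exp_add]; ring)
  -- Cross-multiplying compares `x` and `y` at two coordinates, whence the `2 c` below.
  have hterm : ∀ b, |exp (x a + y b) - exp (y a + x b)|
      ≤ c * (exp (x a + y b) + exp (y a + x b)) := fun b => by
    have hdiff : |x a + y b - (y a + x b)| ≤ 2 * c := by
      calc |x a + y b - (y a + x b)| = |(x a - y a) - (x b - y b)| := by ring_nf
        _ ≤ |x a - y a| + |x b - y b| := abs_sub _ _
        _ ≤ 2 * c := by linarith [hc a, hc b]
    calc _ ≤ (exp (x a + y b) + exp (y a + x b)) / 2 * |x a + y b - (y a + x b)| :=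
          abs_exp_sub_exp_le _ _
      _ ≤ (exp (x a + y b) + exp (y a + x b)) / 2 * (2 * c) := by gcongr
      _ = _ := by ring
  rw [hsub, hadd, abs_div, abs_of_pos (mul_pos hX hY), mul_div_assoc']
  gcongr
  rw [Finset.mul_sum]
  exact (Finset.abs_sum_le_sum_abs _ _).trans (Finset.sum_le_sum fun b _ => hterm b)

lemma sum_mul_sub_sum_mul_le [Nonempty V] {x y l : V → ℝ} {c : ℝ}
    (hl : ∀ a, l a ∈ Set.Icc (0 : ℝ) 1) (hc : ∀ a, |x a - y a| ≤ c) :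
    ∑ a, softmax x a * l a - ∑ a, softmax y a * l a ≤ c := by
  rw [← Finset.sum_sub_distrib]
  simp only [← sub_mul]
  calc _ ≤ (∑ a, |softmax x a - softmax y a|) / 2 :=
        sum_sub_mul_le_half_sum_abs _ (by rw [sum_eq_one, sum_eq_one]) fun a _ => hl a
    _ ≤ (∑ a, c * (softmax x a + softmax y a)) / 2 := by
        gcongr with a; exact abs_sub_le hc a
    _ = c := by rw [← Finset.mul_sum, Finset.sum_add_distrib, sum_eq_one, sum_eq_one]; ring

lemma sum_mul_sub_sum_mul_le_card_mul {x y l : V → ℝ} {c : ℝ}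
    (hl : ∀ a, l a ∈ Set.Icc (0 : ℝ) 1) (hc : ∀ a, |x a - y a| ≤ c) :
    ∑ a, softmax x a * l a - ∑ a, softmax y a * l a ≤ Fintype.card V / 2 * c := by
  rcases subsingleton_or_nontrivial V with _ | _
  · simp only [eq_one_of_subsingleton, sub_self]
    rcases isEmpty_or_nonempty V with _ | ⟨⟨a⟩⟩
    · simp
    · have hc0 : 0 ≤ c := (abs_nonneg _).trans (hc a)
      positivity
  · have hc0 : 0 ≤ c := (abs_nonneg _).trans (hc (Classical.arbitrary V))
    have hcard : (2 : ℝ) ≤ Fintype.card V := by exact_mod_cast Fintype.one_lt_card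
    calc _ ≤ c := sum_mul_sub_sum_mul_le hl hc
      _ ≤ Fintype.card V / 2 * c := by nlinarith

end softmax

theorem regret_decomposition_estimate_perturbation_general
    {Ω : Type*} {m0 : MeasurableSpace Ω} (μ : Measure Ω)
    {V : Type*} [Fintype V]
    (T : ℕ) (η : ℝ) (hη : 0 < η)
    (l : V → ℕ → ℝ) (hl : ∀ a t, l a t ∈ Set.Icc (0 : ℝ) 1)
    (Lhat Ltil : ℕ → Ω → V → ℝ) (M : ℕ → Ω → ℝ)
    (phat p : ℕ → Ω → V → ℝ)
    (hphat : ∀ t ω a, phat t ω a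
      = Real.exp (-η * Lhat t ω a) / ∑ b, Real.exp (-η * Lhat t ω b))
    (hp : ∀ t ω a, p t ω a
      = Real.exp (-η * Ltil t ω a) / ∑ b, Real.exp (-η * Ltil t ω b))
    (hM : ∀ t ω a, |Lhat t ω a - Ltil t ω a| ≤ M t ω)
    (hintphat : ∀ t, Integrable (fun ω => ∑ a, phat t ω a * l a t) μ)
    (hintp : ∀ t, Integrable (fun ω => ∑ a, p t ω a * l a t) μ)
    (hintM : ∀ t, Integrable (M t) μ) :
    (∑ t ∈ Finset.range T, ∫ ω, ∑ a, phat t ω a * l a t ∂μ)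
      - (∑ t ∈ Finset.range T, ∫ ω, ∑ a, p t ω a * l a t ∂μ)
      ≤ (η * (Fintype.card V : ℝ) / 2) * ∑ t ∈ Finset.range T, ∫ ω, M t ω ∂μ := by
  have pointwise : ∀ t ω, ∑ a, phat t ω a * l a t - ∑ a, p t ω a * l a t
      ≤ η * Fintype.card V / 2 * M t ω := fun t ω => by
    have hscaled : ∀ a, |-η * Lhat t ω a - -η * Ltil t ω a| ≤ η * M t ω := fun a => by
      rw [← mul_sub, abs_mul, abs_neg, abs_of_pos hη]
      exact mul_le_mul_of_nonneg_left (hM t ω a) hη.le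
    rw [show phat t ω = softmax (fun a => -η * Lhat t ω a) from funext (hphat t ω),
      show p t ω = softmax (fun a => -η * Ltil t ω a) from funext (hp t ω)]
    linarith [softmax.sum_mul_sub_sum_mul_le_card_mul (fun a => hl a t) hscaled]
  rw [← Finset.sum_sub_distrib, Finset.mul_sum]
  refine Finset.sum_le_sum fun t _ => ?_
  rw [← integral_sub (hintphat t) (hintp t), ← integral_const_mul]
  exact integral_mono ((hintphat t).sub (hintp t)) ((hintM t).const_mul _) (pointwise t)

/-- Regret decomposition under estimate perturbation: two
exponential-weights algorithms with the same learning rate `η > 0` face the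
same deterministic loss sequence `l_{a,t} ∈ [0,1]`; one uses the cumulative
loss estimates `L̂_{t-1}`, the other `L̃_{t-1}`, sampling from the softmax
distributions `p̂_{a,t} ∝ exp(-η L̂_{a,t-1})` and `p_{a,t} ∝ exp(-η L̃_{a,t-1})`.
If `max_a |L̂_{a,t-1} - L̃_{a,t-1}| ≤ M_{t-1}`, the difference of expected
cumulative losses (expressed via the sampling distributions) is at most
`(η |V| / 2) ∑_t E[M_{t-1}]`. -/
theorem regret_decomposition_estimate_perturbation
    {Ω : Type*} {m0 : MeasurableSpace Ω} (μ : Measure Ω) [IsProbabilityMeasure μ]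
    {V : Type*} [Fintype V] [Nonempty V]
    (T : ℕ) (η : ℝ) (hη : 0 < η)
    (l : V → ℕ → ℝ) (hl : ∀ a t, l a t ∈ Set.Icc (0 : ℝ) 1)
    (Lhat Ltil : ℕ → Ω → V → ℝ) (M : ℕ → Ω → ℝ)
    (phat p : ℕ → Ω → V → ℝ)
    (hphat : ∀ t ω a, phat t ω a
      = Real.exp (-η * Lhat t ω a) / ∑ b, Real.exp (-η * Lhat t ω b))
    (hp : ∀ t ω a, p t ω a
      = Real.exp (-η * Ltil t ω a) / ∑ b, Real.exp (-η * Ltil t ω b))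
    (hM : ∀ t ω a, |Lhat t ω a - Ltil t ω a| ≤ M t ω)
    (hintphat : ∀ t, Integrable (fun ω => ∑ a, phat t ω a * l a t) μ)
    (hintp : ∀ t, Integrable (fun ω => ∑ a, p t ω a * l a t) μ)
    (hintM : ∀ t, Integrable (M t) μ) :
    (∑ t ∈ Finset.range T, ∫ ω, ∑ a, phat t ω a * l a t ∂μ)
      - (∑ t ∈ Finset.range T, ∫ ω, ∑ a, p t ω a * l a t ∂μ)
      ≤ (η * (Fintype.card V : ℝ) / 2) * ∑ t ∈ Finset.range T, ∫ ω, M t ω ∂μ :=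
  regret_decomposition_estimate_perturbation_general (m0 := m0) μ T η hη l hl Lhat Ltil M phat p
    hphat hp hM hintphat hintp hintM
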